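/- Let (X,p) be a partial metric space with p(ξ,ξ) = a for all ξ ∈ X (a a real constant), I an admissible ideal on ℕ, and r > 0. If c ∈ X is an I-statistical cluster point of the sequence {ξ_n}, then the rough I-statistical limit set of degree r is contained in the closed ball of radius r about c: I-st-LIM^r ξ_n ⊆ {ξ ∈ X : p(ξ,c) ≤ p(c,c) + r}. -/

import Mathlib

open Filter Topology

/-- A partial metric on a type `X`. -/
structure PartialMetric (X : Type*) where
  p : X → X → ℝ
  self_nonneg : ∀ x : X, 0 ≤ p x x
  self_le : ∀ x y : X, p x x ≤ p x y
  eq_iff : ∀ x y : X, x = y ↔ (p x x = p x y ∧ p x y = p y y)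
  symm : ∀ x y : X, p x y = p y x
  triangle : ∀ x y z : X, p x y ≤ p x z + p z y - p z z

/-- An admissible nontrivial ideal on ℕ. -/
structure IdealN where
  sets : Set (Set ℕ)
  empty_mem : ∅ ∈ sets
  subset_mem : ∀ A B : Set ℕ, A ∈ sets → B ⊆ A → B ∈ sets
  union_mem : ∀ A B : Set ℕ, A ∈ sets → B ∈ sets → A ∪ B ∈ sets
  admissible : ∀ n : ℕ, ({n} : Set ℕ) ∈ sets
  nontrivial : (Set.univ : Set ℕ) ∉ sets

open Classical in
/-- `cnt A n` = number of `k` with `1 ≤ k ≤ n` and `k ∈ A`. -/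
noncomputable def cnt (A : Set ℕ) (n : ℕ) : ℕ :=
  ((Finset.Icc 1 n).filter (fun k => k ∈ A)).card

/-- `I`-limit of a real sequence. -/
def ILim (I : IdealN) (a : ℕ → ℝ) (L : ℝ) : Prop :=
  ∀ ε > (0 : ℝ), {n : ℕ | ε ≤ |a n - L|} ∈ I.sets

/-- The rough `I`-statistical limit set of degree `r` of a sequence `x`. -/
def RSLim {X : Type*} (I : IdealN) (P : PartialMetric X) (x : ℕ → X) (r : ℝ) : Set X :=
  {ξ | ∀ ε > (0 : ℝ), ∀ δ > (0 : ℝ),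
    {n : ℕ | δ ≤ (cnt {k | r + ε ≤ |P.p (x k) ξ - P.p ξ ξ|} n : ℝ) / n} ∈ I.sets}

/-! If `p ξ c > p c c + r`, pick `ε` with `r + 2ε ≤ p ξ c - p c c`. Since all self-distances
agree, the triangle inequality through `x k` shows that every `k` with `x k` within `ε` of `c`
has `x k` at least `r + ε` away from `ξ`. The first index set has positive `I`-density `L`,
while the second has density below `L / 2` off a set of `I`; two sets of `I` cannot cover `ℕ`. -/

lemma cnt_mono {A B : Set ℕ} (h : A ⊆ B) (n : ℕ) : cnt A n ≤ cnt B n := by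
  classical
  exact Finset.card_le_card (Finset.monotone_filter_right _ fun _ _ hk => h hk)

lemma IdealN.exists_notMem_union (I : IdealN) {A B : Set ℕ} (hA : A ∈ I.sets)
    (hB : B ∈ I.sets) : ∃ n, n ∉ A ∧ n ∉ B := by
  by_contra! h
  exact I.nontrivial (I.subset_mem _ _ (I.union_mem A B hA hB) fun n _ => by
    by_cases hn : n ∈ A
    · exact Or.inl hn
    · exact Or.inr (h n hn))

lemma IdealN.exists_notMem (I : IdealN) {A : Set ℕ} (hA : A ∈ I.sets) : ∃ n, n ∉ A := by
  obtain ⟨n, hn, -⟩ := I.exists_notMem_union hA I.empty_mem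
  exact ⟨n, hn⟩

namespace ILim

variable {I : IdealN} {a : ℕ → ℝ} {L : ℝ}

lemma le_of_forall_le (h : ILim I a L) {b : ℝ} (hb : ∀ n, b ≤ a n) : b ≤ L := by
  by_contra! hL
  obtain ⟨n, hn⟩ := I.exists_notMem (h (b - L) (sub_pos.2 hL))
  have hbn := hb n
  simp only [Set.mem_ofPred_eq, not_le, abs_lt] at hn
  linarith [hn.2]

lemma setOf_lt_mem (h : ILim I a L) {δ : ℝ} (hδ : δ < L) : {n | a n < δ} ∈ I.sets := by
  refine I.subset_mem _ _ (h (L - δ) (sub_pos.2 hδ)) fun n (hn : a n < δ) => ?_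
  show L - δ ≤ |a n - L|
  rw [abs_sub_comm]
  linarith [le_abs_self (L - a n)]

end ILim

lemma PartialMetric.sub_le_sub_self_of_self_eq {X : Type*} (P : PartialMetric X) {ξ y : X}
    (hy : P.p y y = P.p ξ ξ) (c : X) : P.p ξ c - P.p y c ≤ P.p y ξ - P.p ξ ξ := by
  linarith [P.triangle ξ c y, P.symm ξ y]

theorem stmt_9_general {X : Type*} (I : IdealN) (P : PartialMetric X) (x : ℕ → X)
    (a : ℝ) (hself : ∀ ξ : X, P.p ξ ξ = a)
    (r : ℝ) (c : X)
    (hc : ∀ ε > (0 : ℝ), ∃ L : ℝ, L ≠ 0 ∧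
      ILim I (fun n => (cnt {k | |P.p (x k) c - P.p c c| < ε} n : ℝ) / n) L) :
    RSLim I P x r ⊆ {ξ : X | P.p ξ c ≤ P.p c c + r} := by
  intro ξ hξ
  show P.p ξ c ≤ P.p c c + r
  by_contra! hfar
  obtain ⟨ε, hε, hgap⟩ : ∃ ε > 0, r + 2 * ε ≤ P.p ξ c - P.p c c :=
    ⟨(P.p ξ c - P.p c c - r) / 2, by linarith, by linarith⟩
  have hnear_far : {k | |P.p (x k) c - P.p c c| < ε} ⊆
      {k | r + ε ≤ |P.p (x k) ξ - P.p ξ ξ|} := by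
    intro k (hk : |P.p (x k) c - P.p c c| < ε)
    have hk' := (abs_lt.1 hk).2
    have := P.sub_le_sub_self_of_self_eq ((hself (x k)).trans (hself ξ).symm) c
    exact (show r + ε ≤ P.p (x k) ξ - P.p ξ ξ by linarith).trans (le_abs_self _)
  obtain ⟨L, hL0, hlim⟩ := hc ε hε
  have hL : 0 < L := (hlim.le_of_forall_le fun n => by positivity).lt_of_ne' hL0
  obtain ⟨n, hn_near, hn_far⟩ :=
    I.exists_notMem_union (hlim.setOf_lt_mem (half_lt_self hL)) (hξ ε hε (L / 2) (half_pos hL))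
  simp only [Set.mem_ofPred_eq, not_lt, not_le] at hn_near hn_far
  have : (cnt {k | |P.p (x k) c - P.p c c| < ε} n : ℝ) / n
      ≤ (cnt {k | r + ε ≤ |P.p (x k) ξ - P.p ξ ξ|} n : ℝ) / n := by
    gcongr
    exact cnt_mono hnear_far n
  linarith

theorem stmt_9 {X : Type*} (I : IdealN) (P : PartialMetric X) (x : ℕ → X)
    (a : ℝ) (hself : ∀ ξ : X, P.p ξ ξ = a)
    (r : ℝ) (hr : 0 < r) (c : X)
    (hc : ∀ ε > (0 : ℝ), ∃ L : ℝ, L ≠ 0 ∧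
      ILim I (fun n => (cnt {k | |P.p (x k) c - P.p c c| < ε} n : ℝ) / n) L) :
    RSLim I P x r ⊆ {ξ : X | P.p ξ c ≤ P.p c c + r} :=
  stmt_9_general I P x a hself r c hc
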